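/- The vectors Y₁=(1/φ², 1/φ, 0), Y₂=(0, 1/φ², 1/φ), Y₃=(1/φ, 0, 1/φ²) in ℝ³, where φ=(1+√5)/2, are linearly independent over ℝ but the ℤ-span of Y₁,…,Y₆ (with Y₄=(-1/φ²,1/φ,0), Y₅=(0,-1/φ²,1/φ), Y₆=(1/φ,0,-1/φ²)) is not a discrete subgroup of ℝ³; in particular it is not a lattice. -/

import Mathlib

/-!
`Y₁, Y₂, Y₃` are the rows of the circulant matrix with first row `(φ⁻², φ⁻¹, 0)`, whose
determinant `φ⁻⁶ + φ⁻³` is positive. On the other hand `Y₃ + Y₆ = 2φ⁻¹ e₁` and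
`Y₁ - Y₄ = 2φ⁻² e₁` lie in the `ℤ`-span, and `φ⁻¹ + φ⁻² = 1` gives the recursion
`φ⁻⁽ⁿ⁺²⁾ = φ⁻ⁿ - φ⁻⁽ⁿ⁺¹⁾`, so every `2φ⁻ⁿ e₁` with `n ≥ 1` lies in the span. These nonzero
vectors tend to `0`, so `0` is not isolated.
-/

open Filter Topology

theorem not_discreteTopology_of_tendsto {X : Type*} [TopologicalSpace X] {S : Set X} {x : X}
    (hx : x ∈ S) {u : ℕ → X} (hu : ∀ n, u n ∈ S) (hne : ∀ n, u n ≠ x)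
    (hlim : Tendsto u atTop (𝓝 x)) : ¬ DiscreteTopology S := by
  rw [discreteTopology_subtype_iff]
  intro h
  have : Tendsto u atTop (𝓝[≠] x ⊓ 𝓟 S) :=
    tendsto_inf.2 ⟨tendsto_nhdsWithin_iff.2 ⟨hlim, .of_forall hne⟩,
      tendsto_principal.2 (.of_forall hu)⟩
  exact (h x hx ▸ this).neBot.ne rfl

theorem pow_succ_smul_mem_of_add_sq_eq_one {R E S : Type*} [Ring R] [AddCommGroup E]
    [Module R E] [SetLike S E] [AddSubgroupClass S E] {s : S} {c : R} {w : E} (hc : c + c ^ 2 = 1)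
    (h₁ : c • w ∈ s) (h₂ : c ^ 2 • w ∈ s) (n : ℕ) : c ^ (n + 1) • w ∈ s := by
  have hrec (m : ℕ) : c ^ (m + 3) = c ^ (m + 1) - c ^ (m + 2) := by
    rw [pow_add c (m + 1) 2, eq_sub_of_add_eq' hc, mul_sub, mul_one, ← pow_succ]
  have hpair (m : ℕ) : c ^ (m + 1) • w ∈ s ∧ c ^ (m + 2) • w ∈ s := by
    induction m with
    | zero => exact ⟨by simpa using h₁, h₂⟩
    | succ m ih => exact ⟨ih.2, by rw [hrec, sub_smul]; exact sub_mem ih.1 ih.2⟩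
  exact (hpair n).1

theorem linearIndependent_circulant_fin_three {K : Type*} [Field K] {a b : K}
    (h : a ^ 3 + b ^ 3 ≠ 0) :
    LinearIndependent K ![![a, b, 0], ![0, a, b], ![b, 0, a]] := by
  refine Matrix.linearIndependent_rows_iff_isUnit (A := !![a, b, 0; 0, a, b; b, 0, a]) |>.2 ?_
  rw [Matrix.isUnit_iff_isUnit_det, Matrix.det_fin_three, isUnit_iff_ne_zero]
  simpa [pow_succ, add_comm] using h

open Real goldenRatio in
theorem inv_goldenRatio_add_sq : φ⁻¹ + φ⁻¹ ^ 2 = 1 := by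
  rw [inv_goldenRatio]
  linear_combination goldenConj_sq

/-- The icosahedral vectors `Y₁, Y₂, Y₃` are linearly independent over `ℝ`, but the
`ℤ`-span of `Y₁,…,Y₆` is not discrete (hence not a lattice) in `ℝ³`. -/
theorem icosahedral_quasilattice_not_discrete
    (φ : ℝ) (hφ : φ = (1 + Real.sqrt 5) / 2)
    (Y : Fin 6 → (Fin 3 → ℝ))
    (hY : Y = ![![1 / φ ^ 2, 1 / φ, 0], ![0, 1 / φ ^ 2, 1 / φ], ![1 / φ, 0, 1 / φ ^ 2],
                ![-(1 / φ ^ 2), 1 / φ, 0], ![0, -(1 / φ ^ 2), 1 / φ],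
                ![1 / φ, 0, -(1 / φ ^ 2)]]) :
    LinearIndependent ℝ ![Y 0, Y 1, Y 2] ∧
    ¬ DiscreteTopology
        (Submodule.span ℤ (Set.range Y) : Submodule ℤ (Fin 3 → ℝ)) := by
  replace hφ : φ = Real.goldenRatio := hφ
  have hφ_pos : 0 < φ := hφ ▸ Real.goldenRatio_pos
  have hc_pos : 0 < φ⁻¹ := inv_pos.2 hφ_pos
  have hc_lt_one : φ⁻¹ < 1 := inv_lt_one_of_one_lt₀ (hφ ▸ Real.one_lt_goldenRatio)
  have hc : φ⁻¹ + φ⁻¹ ^ 2 = 1 := hφ ▸ inv_goldenRatio_add_sq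
  refine ⟨?_, ?_⟩
  · rw [hY]
    exact linearIndependent_circulant_fin_three (by positivity)
  set S := Submodule.span ℤ (Set.range Y)
  have hY_mem (i : Fin 6) : Y i ∈ S := Submodule.subset_span ⟨i, rfl⟩
  set w : Fin 3 → ℝ := ![2, 0, 0]
  have h₁ : φ⁻¹ • w ∈ S := by
    convert add_mem (hY_mem 2) (hY_mem 5) using 1
    ext i; fin_cases i <;> simp [hY, w]; ring
  have h₂ : φ⁻¹ ^ 2 • w ∈ S := by
    convert sub_mem (hY_mem 0) (hY_mem 3) using 1
    ext i; fin_cases i <;> simp [hY, w]; ring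
  refine not_discreteTopology_of_tendsto (zero_mem S)
    (pow_succ_smul_mem_of_add_sq_eq_one hc h₁ h₂)
    (fun n => smul_ne_zero (pow_ne_zero _ hc_pos.ne') (by simp [w])) ?_
  simpa using ((tendsto_pow_atTop_nhds_zero_of_lt_one hc_pos.le hc_lt_one).comp
    (tendsto_add_atTop_nat 1)).smul_const w
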